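/- arXiv:2305.07177 — 2 statements merged into one kernel-verified Lean document; each statement's English description precedes it below -/
import Mathlib

section
/- Under the standing setup, suppose additionally that C_L(H) is nilpotent of class at most c. Then for every f ∈ F and every nonzero b ∈ ℤ/pℤ, [L_b, V_f, …, V_f] = 0, where V_f = C_L(ZH^f) (the fixed-point subalgebra of the subgroup generated by Z and H^f = f^{-1}Hf) occurs c times in the iterated bracket. -/
/-- A group is supersolvable if it has a normal series with cyclic factors all of whose terms
are normal in the whole group.  (Using normality of `s i`, cyclicity of the factor
`s (i+1) ⧸ s i` is expressed by `s (i+1) = s i ⊔ ⟨g⟩` for a single element `g`.) -/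
def IsSupersolvable (G : Type*) [Group G] : Prop :=
  ∃ (n : ℕ) (s : ℕ → Subgroup G), s 0 = ⊥ ∧ s n = ⊤ ∧ (∀ i, (s i).Normal) ∧
    ∀ i < n, ∃ g : G, s (i + 1) = s i ⊔ Subgroup.zpowers g

/-- The fixed-point submodule `C_L(S)` of a set `S` of Lie-algebra automorphisms acting on `L`
via `ρ`.  (It is in fact a Lie subalgebra.) -/
def fixSub {A R L : Type*} [Group A] [CommRing R] [LieRing L] [LieAlgebra R L]
    (ρ : A → (L ≃ₗ⁅R⁆ L)) (S : Set A) : Submodule R L where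
  carrier := {x | ∀ g ∈ S, ρ g x = x}
  add_mem' := by
    intro x y hx hy g hg
    calc (ρ g) (x + y) = (ρ g) x + (ρ g) y := (ρ g).toLieHom.map_add x y
    _ = x + y := by rw [hx g hg, hy g hg]
  zero_mem' := fun g _ => (ρ g).toLieHom.map_zero
  smul_mem' := by
    intro r x hx g hg
    calc (ρ g) (r • x) = r • (ρ g) x := (ρ g).toLieHom.map_smul r x
    _ = r • x := by rw [hx g hg]

/-- The eigenspace of a Lie-algebra automorphism `e` for the eigenvalue `μ`. -/
def eigSp {R L : Type*} [CommRing R] [LieRing L] [LieAlgebra R L]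
    (e : L ≃ₗ⁅R⁆ L) (μ : R) : Submodule R L where
  carrier := {x | e x = μ • x}
  add_mem' := by
    intro x y hx hy
    simp only [Set.mem_setOf_eq] at *
    calc e (x + y) = e x + e y := e.toLieHom.map_add x y
    _ = μ • (x + y) := by rw [hx, hy, smul_add]
  zero_mem' := by
    show e 0 = μ • (0 : L)
    rw [smul_zero]; exact e.toLieHom.map_zero
  smul_mem' := by
    intro r x hx
    simp only [Set.mem_setOf_eq] at *
    calc e (r • x) = r • e x := e.toLieHom.map_smul r x
    _ = μ • r • x := by rw [hx, smul_comm]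

/-- `braSpan R S T` is the `R`-submodule `[S, T]` spanned by all brackets `⁅x, y⁆` with
`x ∈ S`, `y ∈ T`. -/
def braSpan (R : Type*) {L : Type*} [CommRing R] [LieRing L] [LieAlgebra R L]
    (S T : Set L) : Submodule R L :=
  Submodule.span R {z | ∃ x ∈ S, ∃ y ∈ T, ⁅x, y⁆ = z}

/-- `iterBra R S T n` is the left-normed iterated bracket `[S, T, …, T]` with `T` occurring
`n` times (for `n = 0` it is the span of `S`).  In particular a subalgebra with underlying
set `C` is nilpotent of class at most `c` if and only if `iterBra R C C c = ⊥`, and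
`iterBra R Set.univ C c` is the span `[L, C, …, C]`. -/
def iterBra (R : Type*) {L : Type*} [CommRing R] [LieRing L] [LieAlgebra R L]
    (S T : Set L) : ℕ → Submodule R L
  | 0 => Submodule.span R S
  | n + 1 => braSpan R ((iterBra R S T n : Submodule R L) : Set L) T

/-- The conjugate subgroup `H^f = f⁻¹ H f`. -/
def conjSubgroup {A : Type*} [Group A] (f : A) (H : Subgroup A) : Subgroup A :=
  Subgroup.map (MulAut.conj f⁻¹).toMonoidHom H

/-!
Conjugation by `f`, which commutes with `φ`, maps `L_b` to itself and `C_L(Z H^f)` into the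
fixed points of `φ` and `H`, so it suffices to treat `f = 1`. For `x ∈ L_b` and `tᵢ` fixed by
`φ` and `H`, the trace `∑_{h ∈ H} [x, t₁, …, t_c]^h = [∑_h x^h, t₁, …, t_c]` is a bracket of
`c + 1` elements of `C_L(H)`, hence zero. If `φ h = h φ^{n_h}`, then `h` maps `L_b` into
`L_{b n_h}`, and `b n_h ≠ b` for `h ≠ 1` because `H` acts fixed-point-freely on `Z`; so the
independence of the `L_i` forces the summand for `h = 1`, i.e. `[x, t₁, …, t_c]` itself, to vanish.
-/

lemma IsPrimitiveRoot.pow_val_mul_natCast {M : Type*} [CommMonoid M] {ω : M} {p : ℕ}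
    (hω : IsPrimitiveRoot ω p) (b : ZMod p) (n : ℕ) :
    ω ^ (b * n).val = (ω ^ b.val) ^ n := by
  rw [← pow_mul, ← pow_mod_orderOf ω (b.val * n), ← hω.eq_orderOf, ZMod.val_mul,
    ZMod.val_natCast, Nat.mul_mod_mod]

lemma exists_mul_eq_mul_pow_of_zpowers_normal {G : Type*} [Group G] [Finite G] {φ : G}
    (hφ : (Subgroup.zpowers φ).Normal) (g : G) : ∃ n : ℕ, φ * g = g * φ ^ n := by
  obtain ⟨n, hn : φ ^ n = _⟩ := mem_powers_iff_mem_zpowers.mpr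
    (by simpa using hφ.conj_mem φ (Subgroup.mem_zpowers φ) g⁻¹)
  exact ⟨n, by rw [hn]; group⟩

section IteratedBrackets

variable {R L L' : Type*} [CommRing R] [LieRing L] [LieAlgebra R L] [LieRing L']
  [LieAlgebra R L']

lemma braSpan_mono {S S' T T' : Set L} (hS : S ⊆ S') (hT : T ⊆ T') :
    braSpan R S T ≤ braSpan R S' T' :=
  Submodule.span_mono fun _ ⟨x, hx, y, hy, hxy⟩ => ⟨x, hS hx, y, hT hy, hxy⟩

lemma iterBra_mono {S S' T T' : Set L} (hS : S ⊆ S') (hT : T ⊆ T') (n : ℕ) :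
    iterBra R S T n ≤ iterBra R S' T' n := by
  induction n with
  | zero => exact Submodule.span_mono hS
  | succ n ih => exact braSpan_mono ih hT

lemma iterBra_map_le (P : L →ₗ[R] L') (g : L → L') {S T : Set L}
    (hP : ∀ x, ∀ t ∈ T, P ⁅x, t⁆ = ⁅P x, g t⁆) (n : ℕ) :
    (iterBra R S T n).map P ≤ iterBra R (P '' S) (g '' T) n := by
  induction n with
  | zero => exact (Submodule.map_span P S).le
  | succ n ih =>
    rw [iterBra, braSpan, Submodule.map_span, Submodule.span_le]
    rintro _ ⟨_, ⟨x, hx, t, ht, rfl⟩, rfl⟩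
    exact Submodule.subset_span
      ⟨P x, ih (Submodule.mem_map_of_mem hx), g t, Set.mem_image_of_mem g ht, (hP x t ht).symm⟩

lemma iterBra_le_eigSp (e : L ≃ₗ⁅R⁆ L) {μ : R} {S T : Set L} (hS : S ⊆ eigSp e μ)
    (hT : ∀ t ∈ T, e t = t) (n : ℕ) : iterBra R S T n ≤ eigSp e μ := by
  induction n with
  | zero => exact Submodule.span_le.mpr hS
  | succ n ih =>
    refine Submodule.span_le.mpr ?_
    rintro _ ⟨x, hx, t, ht, rfl⟩
    have hx' : e x = μ • x := ih hx
    show e ⁅x, t⁆ = μ • ⁅x, t⁆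
    rw [LieEquiv.map_lie, hx', hT t ht, smul_lie]

end IteratedBrackets

section Action

variable {A R L : Type*} [Group A] [CommRing R] [LieRing L] [LieAlgebra R L]
  {ρ : A → (L ≃ₗ⁅R⁆ L)}

lemma mem_fixSub_of_conj (hρmul : ∀ g₁ g₂ : A, ∀ x : L, ρ (g₁ * g₂) x = ρ g₁ (ρ g₂ x))
    {S S' : Set A} {g : A} (hg : ∀ s ∈ S', g⁻¹ * s * g ∈ S) {x : L} (hx : x ∈ fixSub ρ S) :
    ρ g x ∈ fixSub ρ S' := by
  intro s hs
  rw [← hρmul, show s * g = g * (g⁻¹ * s * g) by group, hρmul, hx _ (hg s hs)]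

lemma map_mem_eigSp_pow (hρone : ∀ x : L, ρ 1 x = x)
    (hρmul : ∀ g₁ g₂ : A, ∀ x : L, ρ (g₁ * g₂) x = ρ g₁ (ρ g₂ x))
    {φ g : A} {n : ℕ} (hφg : φ * g = g * φ ^ n) {μ : R} {x : L} (hx : x ∈ eigSp (ρ φ) μ) :
    ρ g x ∈ eigSp (ρ φ) (μ ^ n) := by
  have hx' : ρ φ x = μ • x := hx
  have hpow : ∀ k : ℕ, ρ (φ ^ k) x = μ ^ k • x := by
    intro k
    induction k with
    | zero => simp [hρone]
    | succ k ih => rw [pow_succ, hρmul, hx', map_smul, ih, smul_smul, pow_succ, mul_comm]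
  show ρ φ (ρ g x) = μ ^ n • ρ g x
  rw [← hρmul, hφg, hρmul, hpow, map_smul]

lemma map_mem_iterBra_of_commute (hρone : ∀ x : L, ρ 1 x = x)
    (hρmul : ∀ g₁ g₂ : A, ∀ x : L, ρ (g₁ * g₂) x = ρ g₁ (ρ g₂ x))
    {φ g : A} (hφg : φ * g = g * φ) {S S' : Set A} (hg : ∀ s ∈ S', g⁻¹ * s * g ∈ S) {μ : R}
    {n : ℕ} {u : L} (hu : u ∈ iterBra R (eigSp (ρ φ) μ : Set L) (fixSub ρ S : Set L) n) :
    ρ g u ∈ iterBra R (eigSp (ρ φ) μ : Set L) (fixSub ρ S' : Set L) n := by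
  refine iterBra_mono ?_ ?_ n (iterBra_map_le (ρ g : L →ₗ⁅R⁆ L) (ρ g)
    (fun x t _ => LieEquiv.map_lie _ x t) n (Submodule.mem_map_of_mem hu))
  · rintro _ ⟨x, hx, rfl⟩
    exact pow_one μ ▸ map_mem_eigSp_pow hρone hρmul (by rwa [pow_one]) hx
  · rintro _ ⟨t, ht, rfl⟩
    exact mem_fixSub_of_conj hρmul hg ht

lemma sum_mem_fixSub (hρmul : ∀ g₁ g₂ : A, ∀ x : L, ρ (g₁ * g₂) x = ρ g₁ (ρ g₂ x))
    (H : Subgroup A) [Fintype H] (x : L) : ∑ h : H, ρ h x ∈ fixSub ρ (H : Set A) := by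
  intro g hg
  rw [map_sum]
  simp_rw [← hρmul]
  exact Fintype.sum_equiv (Equiv.mulLeft ⟨g, hg⟩) _ _ fun h => rfl

lemma sum_eq_zero_of_mem_iterBra (hρmul : ∀ g₁ g₂ : A, ∀ x : L, ρ (g₁ * g₂) x = ρ g₁ (ρ g₂ x))
    {H : Subgroup A} [Fintype H] {c : ℕ}
    (hcH : iterBra R (fixSub ρ (H : Set A) : Set L) (fixSub ρ (H : Set A) : Set L) c = ⊥)
    {S T : Set L} (hT : T ⊆ fixSub ρ (H : Set A)) {u : L} (hu : u ∈ iterBra R S T c) :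
    ∑ h : H, ρ h u = 0 := by
  let P : L →ₗ[R] L := ∑ h : H, ((ρ h : L →ₗ⁅R⁆ L) : L →ₗ[R] L)
  have hP : ∀ x, P x = ∑ h : H, ρ h x := fun x => LinearMap.sum_apply _ _ x
  have hPlie : ∀ x, ∀ t ∈ T, P ⁅x, t⁆ = ⁅P x, id t⁆ := by
    intro x t ht
    simp only [hP, LieEquiv.map_lie, hT ht _ (SetLike.coe_mem _), sum_lie, id]
  have hPS : P '' S ⊆ fixSub ρ (H : Set A) := by
    rintro _ ⟨x, -, rfl⟩
    exact hP x ▸ sum_mem_fixSub hρmul H x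
  have hPu := iterBra_map_le P id hPlie c (Submodule.mem_map_of_mem hu)
  rw [Set.image_id] at hPu
  have hzero := iterBra_mono hPS hT c hPu
  rwa [hcH, Submodule.mem_bot, hP] at hzero

lemma eq_zero_of_sum_eq_zero_of_mem_eigSp {p : ℕ} [Fact p.Prime]
    (hρone : ∀ x : L, ρ 1 x = x) (hρmul : ∀ g₁ g₂ : A, ∀ x : L, ρ (g₁ * g₂) x = ρ g₁ (ρ g₂ x))
    {H : Subgroup A} [Fintype H] {φ : A} (hφ : orderOf φ = p)
    (hnorm : ∀ h ∈ H, ∃ n : ℕ, φ * h = h * φ ^ n) (hfree : ∀ h ∈ H, φ * h = h * φ → h = 1)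
    {ω : R} (hω : IsPrimitiveRoot ω p) {Li : ZMod p → Submodule R L}
    (hLi : ∀ i : ZMod p, Li i = eigSp (ρ φ) (ω ^ i.val)) (hind : iSupIndep Li)
    {b : ZMod p} (hb : b ≠ 0) {u : L} (hu : u ∈ Li b) (hsum : ∑ h : H, ρ h u = 0) : u = 0 := by
  have hmoved : ∀ h : H, h ≠ 1 → ρ h u ∈ ⨆ (j) (_ : j ≠ b), Li j := by
    intro h hh
    obtain ⟨n, hn⟩ := hnorm h h.2
    have hmem : ρ h u ∈ Li (b * n) := by
      rw [hLi, hω.pow_val_mul_natCast]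
      exact map_mem_eigSp_pow hρone hρmul hn (hLi b ▸ hu)
    refine le_iSup₂ (f := fun j (_ : j ≠ b) => Li j) (b * n) ?_ hmem
    rw [Ne, mul_eq_left₀ hb, ← Nat.cast_one, ZMod.natCast_eq_natCast_iff]
    intro hn1
    have hφn : φ ^ n = φ ^ 1 := pow_eq_pow_iff_modEq.mpr (by rwa [hφ])
    rw [hφn, pow_one] at hn
    exact hh (Subtype.ext (hfree h h.2 hn))
  classical
  have hrest : ∑ h ∈ Finset.univ.erase (1 : H), ρ h u ∈ ⨆ (j) (_ : j ≠ b), Li j :=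
    Submodule.sum_mem _ fun h hh => hmoved h (Finset.ne_of_mem_erase hh)
  rw [← Finset.add_sum_erase _ _ (Finset.mem_univ 1), OneMemClass.coe_one, hρone] at hsum
  exact Submodule.disjoint_def.mp (hind b) u hu (eq_neg_of_add_eq_zero_left hsum ▸ neg_mem hrest)

lemma iterBra_eigSp_fixSub_insert_eq_bot {p : ℕ} [Fact p.Prime]
    (hρone : ∀ x : L, ρ 1 x = x) (hρmul : ∀ g₁ g₂ : A, ∀ x : L, ρ (g₁ * g₂) x = ρ g₁ (ρ g₂ x))
    {H : Subgroup A} [Fintype H] {φ : A} (hφ : orderOf φ = p)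
    (hnorm : ∀ h ∈ H, ∃ n : ℕ, φ * h = h * φ ^ n) (hfree : ∀ h ∈ H, φ * h = h * φ → h = 1)
    {ω : R} (hω : IsPrimitiveRoot ω p) {Li : ZMod p → Submodule R L}
    (hLi : ∀ i : ZMod p, Li i = eigSp (ρ φ) (ω ^ i.val)) (hind : iSupIndep Li) {c : ℕ}
    (hcH : iterBra R (fixSub ρ (H : Set A) : Set L) (fixSub ρ (H : Set A) : Set L) c = ⊥)
    {b : ZMod p} (hb : b ≠ 0) :
    iterBra R (Li b : Set L) (fixSub ρ (insert φ (H : Set A)) : Set L) c = ⊥ := by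
  refine eq_bot_iff.mpr fun u hu => ?_
  have hub : u ∈ Li b := (hLi b).ge <| iterBra_le_eigSp (ρ φ)
    (SetLike.coe_subset_coe.mpr (hLi b).le)
    (fun t (ht : t ∈ fixSub ρ (insert φ (H : Set A))) => ht φ (Set.mem_insert _ _)) c hu
  have hsum : ∑ h : H, ρ h u = 0 := sum_eq_zero_of_mem_iterBra hρmul hcH
    (fun t (ht : t ∈ fixSub ρ (insert φ (H : Set A))) g hg => ht g (Set.mem_insert_of_mem _ hg)) hu
  exact eq_zero_of_sum_eq_zero_of_mem_eigSp hρone hρmul hφ hnorm hfree hω hLi hind hb hub hsum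

end Action

theorem bracket_component_with_conjugate_fixed_points_vanishes_general
    (p : ℕ) (hp : p.Prime)
    (A : Type*) [Group A] [Finite A] (F H : Subgroup A)
    (hfrob : ∀ x ∈ H, x ≠ 1 → ∀ f ∈ F, x * f = f * x → f = 1)
    (hFab : ∀ f ∈ F, ∀ g ∈ F, f * g = g * f)
    (Z : Subgroup A) (hZF : Z ≤ F) (hZnorm : Z.Normal) (hZcard : Nat.card Z = p)
    (φ : A) (hφZ : φ ∈ Z) (hφgen : Z ≤ Subgroup.zpowers φ)
    (R : Type*) [CommRing R]
    (ω : R) (hω : IsPrimitiveRoot ω p)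
    (L : Type*) [LieRing L] [LieAlgebra R L]
    (ρ : A → (L ≃ₗ⁅R⁆ L))
    (hρone : ∀ x : L, ρ 1 x = x)
    (hρmul : ∀ g₁ g₂ : A, ∀ x : L, ρ (g₁ * g₂) x = ρ g₁ (ρ g₂ x))
    (Li : ZMod p → Submodule R L)
    (hLi : ∀ i : ZMod p, Li i = eigSp (ρ φ) (ω ^ i.val))
    (hdec : DirectSum.IsInternal Li)
    (c : ℕ)
    (hcH : iterBra R (fixSub ρ (H : Set A) : Set L) (fixSub ρ (H : Set A) : Set L) c = ⊥) :
    ∀ f ∈ F, ∀ b : ZMod p, b ≠ 0 →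
      iterBra R (Li b : Set L)
        (fixSub ρ ((Z ⊔ conjSubgroup f H : Subgroup A) : Set A) : Set L) c = ⊥ := by
  intro f hf b hb
  have : Fact p.Prime := ⟨hp⟩
  have : Fintype H := Fintype.ofFinite H
  have hZ : Z = Subgroup.zpowers φ := le_antisymm hφgen (Subgroup.zpowers_le.mpr hφZ)
  have hφ : orderOf φ = p := by rw [← hZcard, hZ, Nat.card_zpowers]
  have hφF : φ ∈ F := hZF hφZ
  have hfree : ∀ h ∈ H, φ * h = h * φ → h = 1 := by
    intro h hh hcomm
    by_contra hne
    rw [hfrob h hh hne φ hφF hcomm.symm, orderOf_one] at hφ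
    exact hp.one_lt.ne hφ
  have hfφ : φ * f = f * φ := hFab φ hφF f hf
  have hconj : ∀ s ∈ insert φ (H : Set A), f⁻¹ * s * f ∈ (Z ⊔ conjSubgroup f H : Subgroup A) := by
    rintro s (hs | hs)
    · rw [hs, mul_assoc, hfφ, inv_mul_cancel_left]
      exact Subgroup.mem_sup_left hφZ
    · exact Subgroup.mem_sup_right ⟨s, hs, by simp⟩
  refine eq_bot_iff.mpr fun u hu => ?_
  have hfu := map_mem_iterBra_of_commute hρone hρmul hfφ hconj (hLi b ▸ hu)
  rw [← hLi, iterBra_eigSp_fixSub_insert_eq_bot hρone hρmul hφ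
    (fun h _ => exists_mul_eq_mul_pow_of_zpowers_normal (hZ ▸ hZnorm) h) hfree hω hLi
    hdec.submodule_iSupIndep hcH hb, Submodule.mem_bot] at hfu
  exact (ρ f).injective (hfu.trans (map_zero _).symm)

/-- Standing setup: a supersolvable Frobenius group `FH` (the finite group `A` with kernel
`F` elementary abelian of order `p^2` and cyclic complement `H` of order `q`), a subgroup
`Z ≤ F` of order `p` normal in `FH` with generator `φ`, a finite commutative ring `R` with
a primitive `p`-th root of unity `ω` in which `p` is invertible, a Lie algebra `L` over `R`
on which `FH` acts by Lie-algebra automorphisms via `ρ`, and the eigenspace decomposition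
`L = ⊕_{i ∈ ℤ/pℤ} L_i` of `ρ φ`.  If moreover `C_L(H)` is nilpotent of class at most `c`,
then `[L_b, V_f, …, V_f] = 0` for every `f ∈ F` and every `b ≠ 0`, where
`V_f = C_L(Z H^f)` occurs `c` times. -/
theorem bracket_component_with_conjugate_fixed_points_vanishes
    (p : ℕ) (hp : p.Prime)
    (A : Type*) [Group A] [Finite A] (F H : Subgroup A)
    (hFnorm : F.Normal) (hFH : F ⊓ H = ⊥) (hFHtop : F ⊔ H = ⊤)
    (hFnt : F ≠ ⊥) (hHnt : H ≠ ⊥)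
    (hfrob : ∀ x ∈ H, x ≠ 1 → ∀ f ∈ F, x * f = f * x → f = 1)
    (hss : IsSupersolvable A)
    (hFcard : Nat.card F = p ^ 2) (hFexp : ∀ f ∈ F, f ^ p = 1)
    (hFab : ∀ f ∈ F, ∀ g ∈ F, f * g = g * f)
    (q : ℕ) (hHcard : Nat.card H = q) (hHcyc : IsCyclic H)
    (Z : Subgroup A) (hZF : Z ≤ F) (hZnorm : Z.Normal) (hZcard : Nat.card Z = p)
    (φ : A) (hφZ : φ ∈ Z) (hφgen : Z ≤ Subgroup.zpowers φ)
    (R : Type*) [CommRing R] [Finite R]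
    (ω : R) (hω : IsPrimitiveRoot ω p) (hpu : IsUnit (p : R))
    (L : Type*) [LieRing L] [LieAlgebra R L]
    (ρ : A → (L ≃ₗ⁅R⁆ L))
    (hρone : ∀ x : L, ρ 1 x = x)
    (hρmul : ∀ g₁ g₂ : A, ∀ x : L, ρ (g₁ * g₂) x = ρ g₁ (ρ g₂ x))
    (Li : ZMod p → Submodule R L)
    (hLi : ∀ i : ZMod p, Li i = eigSp (ρ φ) (ω ^ i.val))
    (hdec : DirectSum.IsInternal Li)
    (c : ℕ)
    (hcH : iterBra R (fixSub ρ (H : Set A) : Set L) (fixSub ρ (H : Set A) : Set L) c = ⊥) :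
    ∀ f ∈ F, ∀ b : ZMod p, b ≠ 0 →
      iterBra R (Li b : Set L)
        (fixSub ρ ((Z ⊔ conjSubgroup f H : Subgroup A) : Set A) : Set L) c = ⊥ :=
  bracket_component_with_conjugate_fixed_points_vanishes_general p hp A F H hfrob hFab Z hZF hZnorm
    hZcard φ hφZ hφgen R ω hω L ρ hρone hρmul Li hLi hdec c hcH
end

section
/- Under the standing setup, suppose additionally that L is metabelian (i.e., [[L,L],[L,L]] = 0) and that C_L(x) is nilpotent of class at most d for every nontrivial x ∈ F. Set L'_F = [L,L] ∩ C_L(F) and k = |F \ Z| = p^2 − p. Then for every a ∈ ℤ/pℤ, [L'_F, L_a, …, L_a] = 0, where L_a occurs k(d−1)+1 times in the iterated bracket. -/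
/-!
Because `L` is metabelian, a bracket `[c, v₁, …, vₙ]` with `c ∈ [L, L]` does not depend on the
order of the `vᵢ`. Each `L_a` lies in the sum of the fixed-point spaces `C_L(x)` of `p` elements
`x ∈ F^#`: for `a = 0` take `x = φ`; for `a ≠ 0` take `x = φ^i t` with `t ∈ F \ Z`, since the
sums of the orbits of `v ∈ L_a` under these `p` cyclic groups add up to `p • v`. Expanding a
bracket with `c ∈ L'_F` and more than `p (d - 1)` entries from `L_a` accordingly, by pigeonhole
`d` entries are fixed by a common `x`; moving them to the front gives an element of
`[C_L(x), C_L(x), …, C_L(x)] = 0`. This suffices because `p ≤ p^2 - p`.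
-/

section LeftNormed

variable {L : Type*} [LieRing L]

def leftNormedLie (c : L) (l : List L) : L := l.foldl (fun w v => ⁅w, v⁆) c

@[simp] lemma leftNormedLie_cons (c v : L) (l : List L) :
    leftNormedLie c (v :: l) = leftNormedLie ⁅c, v⁆ l := rfl

lemma leftNormedLie_append (c : L) (l₁ l₂ : List L) :
    leftNormedLie c (l₁ ++ l₂) = leftNormedLie (leftNormedLie c l₁) l₂ :=
  List.foldl_append

@[simp] lemma leftNormedLie_zero : ∀ l : List L, leftNormedLie (0 : L) l = 0
  | [] => rfl
  | v :: l => by rw [leftNormedLie_cons, zero_lie, leftNormedLie_zero l]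

lemma lie_lie_right_comm {w u v : L} (h : ⁅w, ⁅u, v⁆⁆ = 0) : ⁅⁅w, u⁆, v⁆ = ⁅⁅w, v⁆, u⁆ := by
  rw [leibniz_lie, ← lie_skew u ⁅w, v⁆, ← sub_eq_add_neg] at h
  exact sub_eq_zero.mp h

lemma leftNormedLie_perm {M : Set L} (hM : ∀ w ∈ M, ∀ x, ⁅w, x⁆ ∈ M)
    (hMM : ∀ w ∈ M, ∀ u v : L, ⁅w, ⁅u, v⁆⁆ = 0) {l l' : List L} (h : l.Perm l') :
    ∀ w ∈ M, leftNormedLie w l = leftNormedLie w l' := by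
  induction h with
  | nil => exact fun _ _ => rfl
  | cons v _ ih => exact fun w hw => ih _ (hM w hw v)
  | swap u v l =>
    exact fun w hw => by simp only [leftNormedLie_cons, lie_lie_right_comm (hMM w hw v u)]
  | trans _ _ ih₁ ih₂ => exact fun w hw => (ih₁ w hw).trans (ih₂ w hw)

end LeftNormed

section IterBra

variable {R L : Type*} [CommRing R] [LieRing L] [LieAlgebra R L]

lemma braSpan_bot_left (T : Set L) : braSpan R ((⊥ : Submodule R L) : Set L) T = ⊥ := by
  refine le_bot_iff.mp (Submodule.span_le.mpr ?_)
  rintro _ ⟨x, hx, y, -, rfl⟩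
  rw [SetLike.mem_coe, Submodule.mem_bot] at hx
  simp [hx]

lemma iterBra_eq_bot_of_le {S T : Set L} {n m : ℕ} (h : iterBra R S T n = ⊥) (hnm : n ≤ m) :
    iterBra R S T m = ⊥ := by
  induction m, hnm using Nat.le_induction with
  | base => exact h
  | succ m _ ih =>
    change braSpan R _ T = ⊥
    rw [ih, braSpan_bot_left]

lemma lie_mem_braSpan {S T : Set L} {x y : L} (hx : x ∈ S) (hy : y ∈ T) :
    ⁅x, y⁆ ∈ braSpan R S T :=
  Submodule.subset_span ⟨x, hx, y, hy, rfl⟩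

lemma lie_eq_zero_of_braSpan_eq_bot {S T : Set L} (h : braSpan R S T = ⊥) {x y : L} (hx : x ∈ S)
    (hy : y ∈ T) : ⁅x, y⁆ = 0 :=
  (Submodule.mem_bot R).mp (h ▸ lie_mem_braSpan hx hy)

lemma leftNormedLie_mem_iterBra {S T : Set L} {c : L} (hc : c ∈ Submodule.span R S) :
    ∀ l : List L, (∀ v ∈ l, v ∈ T) → leftNormedLie c l ∈ iterBra R S T l.length := by
  intro l
  induction l using List.reverseRecOn with
  | nil => exact fun _ => hc
  | append_singleton l v ih =>
    intro hl
    rw [leftNormedLie_append, List.length_append, List.length_singleton]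
    exact lie_mem_braSpan (ih fun u hu => hl u (by simp [hu])) (hl v (by simp))

lemma iterBra_le_span_leftNormedLie {S T U : Set L} (hTU : T ⊆ Submodule.span R U) (n : ℕ) :
    iterBra R S T n ≤ Submodule.span R
      {w | ∃ c ∈ S, ∃ l : List L, l.length = n ∧ (∀ v ∈ l, v ∈ U) ∧ leftNormedLie c l = w} := by
  induction n with
  | zero => exact Submodule.span_mono fun c hc => ⟨c, hc, [], rfl, by simp, rfl⟩
  | succ n ih =>
    refine Submodule.span_le.mpr ?_
    rintro _ ⟨x, hx, y, hy, rfl⟩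
    replace hx := ih hx
    replace hy := hTU hy
    induction hy using Submodule.span_induction with
    | mem u hu =>
      induction hx using Submodule.span_induction with
      | mem z hz =>
        obtain ⟨c, hc, l, rfl, hl, rfl⟩ := hz
        refine Submodule.subset_span ⟨c, hc, l ++ [u], by simp, ?_, leftNormedLie_append _ _ _⟩
        simpa [or_imp, forall_and] using ⟨hl, hu⟩
      | zero => simp
      | add a b _ _ ha hb => rw [add_lie]; exact add_mem ha hb
      | smul r a _ ha => rw [smul_lie]; exact Submodule.smul_mem _ r ha
    | zero => simp
    | add a b _ _ ha hb => rw [lie_add]; exact add_mem ha hb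
    | smul r a _ ha => rw [lie_smul]; exact Submodule.smul_mem _ r ha

end IterBra

lemma List.exists_lt_length_filter_of_mul_lt_length {α ι : Type*} [Fintype ι] [DecidableEq ι]
    (χ : α → ι) {l : List α} {n : ℕ} (hn : Fintype.card ι * n < l.length) :
    ∃ i, n < (l.filter (fun v => χ v = i)).length := by
  have hsum : ∑ i, (l.filter (fun v => χ v = i)).length = l.length := by
    have h := Multiset.sum_count_eq_card (s := Finset.univ) (m := (l.map χ : Multiset ι)) (by simp)
    rw [Multiset.coe_card, List.length_map] at h
    rw [← h]
    refine Finset.sum_congr rfl fun i _ => ?_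
    simp [List.count, List.countP_eq_length_filter, List.filter_map, Function.comp_def,
      _root_.beq_eq_decide]
  obtain ⟨i, -, hi⟩ := Finset.exists_lt_of_sum_lt (s := Finset.univ) (f := fun _ => n)
    (by rwa [hsum, Finset.sum_const, Finset.card_univ, smul_eq_mul])
  exact ⟨i, hi⟩

section Metabelian

variable {R L : Type*} [CommRing R] [LieRing L] [LieAlgebra R L] {M : Set L}
  (hM : ∀ w ∈ M, ∀ x, ⁅w, x⁆ ∈ M) (hMM : ∀ w ∈ M, ∀ u v : L, ⁅w, ⁅u, v⁆⁆ = 0)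
include hM hMM

/-- Pigeonhole: `d` of the entries lie in a common `C i`; bring them to the front. -/
lemma leftNormedLie_eq_zero_of_mul_lt_length {ι : Type*} [Fintype ι] (C : ι → Set L) {d : ℕ}
    (hC : ∀ i, iterBra R (C i) (C i) d = ⊥) {c : L} (hcM : c ∈ M) (hcC : ∀ i, c ∈ C i)
    {l : List L} (hl : ∀ v ∈ l, ∃ i, v ∈ C i) (hlen : Fintype.card ι * (d - 1) < l.length) :
    leftNormedLie c l = 0 := by
  classical
  have : Nonempty ι := by
    obtain ⟨v, hv⟩ := List.exists_mem_of_length_pos (Nat.zero_lt_of_lt hlen)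
    exact (hl v hv).nonempty
  choose! χ hχ using hl
  obtain ⟨i, hi⟩ := l.exists_lt_length_filter_of_mul_lt_length χ hlen
  have hfront : leftNormedLie c (l.filter (fun v => χ v = i)) = 0 := by
    have h := leftNormedLie_mem_iterBra (T := C i) (Submodule.subset_span (R := R) (hcC i))
      (l.filter (fun v => χ v = i)) fun v hv => by
        obtain ⟨hvl, hvi⟩ := List.mem_filter.mp hv
        simpa [of_decide_eq_true hvi] using hχ v hvl
    rwa [iterBra_eq_bot_of_le (hC i) (by omega), Submodule.mem_bot] at h
  rw [leftNormedLie_perm hM hMM (List.filter_append_perm _ l).symm c hcM, leftNormedLie_append,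
    hfront, leftNormedLie_zero]

theorem iterBra_eq_bot_of_subset_iSup {ι : Type*} [Fintype ι] (C : ι → Submodule R L) {d : ℕ}
    (hC : ∀ i, iterBra R (C i : Set L) (C i : Set L) d = ⊥) {S T : Set L} (hSM : S ⊆ M)
    (hSC : ∀ i, S ⊆ C i) (hT : T ⊆ (⨆ i, C i : Submodule R L)) {n : ℕ}
    (hn : Fintype.card ι * (d - 1) < n) : iterBra R S T n = ⊥ := by
  rw [Submodule.iSup_eq_span] at hT
  refine le_bot_iff.mp ((iterBra_le_span_leftNormedLie hT n).trans (Submodule.span_le.mpr ?_))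
  rintro _ ⟨c, hc, l, rfl, hl, rfl⟩
  exact (Submodule.mem_bot R).mpr <| leftNormedLie_eq_zero_of_mul_lt_length hM hMM (C ·) hC
    (hSM hc) (hSC · hc) (by simpa using hl) hn

end Metabelian

section Action

variable {A R L : Type*} [Group A] [CommRing R] [LieRing L] [LieAlgebra R L]
  {ρ : A → (L ≃ₗ⁅R⁆ L)}

lemma fixSub_anti {S S' : Set A} (h : S ⊆ S') : fixSub ρ S' ≤ fixSub ρ S :=
  fun _ hx g hg => hx g (h hg)

lemma eigSp_one_le_fixSub (g : A) : eigSp (ρ g) 1 ≤ fixSub ρ {g} := by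
  rintro x hx _ rfl
  exact hx.trans (one_smul R x)

lemma sum_addChar_smul_eq_zero {G : Type*} [AddGroup G] [Fintype G] (ψ : AddChar G R)
    (e : L ≃ₗ⁅R⁆ L) {g : G} (hdisj : Disjoint (eigSp e 1) (eigSp e (ψ g))) {x : L}
    (hx : x ∈ eigSp e (ψ g)) : (∑ b, ψ b) • x = 0 := by
  have hσ : (∑ b, ψ b) * ψ g = ∑ b, ψ b := by
    rw [Finset.sum_mul]
    exact Fintype.sum_equiv (Equiv.addRight g) _ _ fun b => (ψ.map_add_eq_mul b g).symm
  refine Submodule.disjoint_def.mp hdisj _ ?_ (Submodule.smul_mem _ _ hx)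
  change e ((∑ b, ψ b) • x) = (1 : R) • (∑ b, ψ b) • x
  rw [map_smul, hx.out, smul_smul, hσ, one_smul]

variable (hρone : ∀ x : L, ρ 1 x = x)
  (hρmul : ∀ g₁ g₂ : A, ∀ x : L, ρ (g₁ * g₂) x = ρ g₁ (ρ g₂ x))
include hρmul

lemma apply_mem_eigSp_of_commute {g h : A} (hgh : g * h = h * g) {μ : R} {x : L}
    (hx : x ∈ eigSp (ρ h) μ) : ρ g x ∈ eigSp (ρ h) μ := by
  change ρ h (ρ g x) = μ • ρ g x
  rw [← hρmul, ← hgh, hρmul, hx.out, map_smul]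

lemma sum_pow_apply_mem_fixSub {g : A} {n : ℕ} (hg : g ^ n = 1) (x : L) :
    ∑ m ∈ Finset.range n, ρ (g ^ m) x ∈ fixSub ρ {g} := by
  intro g' hg'
  rw [Set.mem_singleton_iff.mp hg']
  have hshift := (Finset.sum_range_succ' (fun m => ρ (g ^ m) x) n).symm.trans
    (Finset.sum_range_succ (fun m => ρ (g ^ m) x) n)
  rw [hg, pow_zero, add_left_inj] at hshift
  rw [map_sum, ← hshift]
  exact Finset.sum_congr rfl fun m _ => by rw [← hρmul, ← pow_succ']

include hρone

lemma pow_apply_of_mem_eigSp {g : A} {μ : R} {x : L} (hx : x ∈ eigSp (ρ g) μ) :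
    ∀ k : ℕ, ρ (g ^ k) x = μ ^ k • x
  | 0 => by rw [pow_zero, pow_zero, one_smul, hρone]
  | k + 1 => by
    rw [pow_succ, hρmul, hx.out, map_smul, pow_apply_of_mem_eigSp hx k, smul_smul, pow_succ']

/-- For `ζ ^ p = 1`, the orbit sums of `x ∈ L_ζ` under the `p` cyclic subgroups `⟨φ^i t⟩` add up
to `p • x`: the terms `ρ(t^m) x` with `m ≠ 0` come with the coefficient `∑ᵢ ζ^(im)`,
which kills `L_ζ` because that eigenspace meets `L_1` trivially. -/
theorem eigSp_le_iSup_fixSub {p : ℕ} [Fact p.Prime] {φ t : A} (hφt : φ * t = t * φ)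
    (hφ : φ ^ p = 1) (ht : t ^ p = 1) {ζ : R} (hζ : ζ ^ p = 1)
    (hdisj : Disjoint (eigSp (ρ φ) 1) (eigSp (ρ φ) ζ)) (hpu : IsUnit (p : R)) :
    eigSp (ρ φ) ζ ≤ ⨆ i : ZMod p, fixSub ρ {φ ^ i.val * t} := by
  set ψ := AddChar.zmodChar p hζ
  have hψ1 : ψ 1 = ζ := by simp [ψ, AddChar.zmodChar_apply, ZMod.val_one]
  have htE : ∀ v ∈ eigSp (ρ φ) ζ, ∀ m : ℕ, ρ (t ^ m) v ∈ eigSp (ρ φ) ζ := fun v hv m =>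
    apply_mem_eigSp_of_commute hρmul ((Commute.pow_left hφt.symm m).eq) hv
  have hterm : ∀ v ∈ eigSp (ρ φ) ζ, ∀ (i : ZMod p) (m : ℕ),
      ρ ((φ ^ i.val * t) ^ m) v = ψ (m • i) • ρ (t ^ m) v := by
    intro v hv i m
    rw [(Commute.pow_left hφt i.val).mul_pow, ← pow_mul, hρmul,
      pow_apply_of_mem_eigSp hρone hρmul (htE v hv m), AddChar.map_nsmul_eq_pow,
      AddChar.zmodChar_apply, pow_mul]
  have hsum : ∀ v ∈ eigSp (ρ φ) ζ,
      ∑ i : ZMod p, ∑ m ∈ Finset.range p, ρ ((φ ^ i.val * t) ^ m) v = (p : R) • v := by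
    intro v hv
    simp_rw [hterm v hv]
    rw [Finset.sum_comm, Finset.sum_eq_single_of_mem 0 (by simp [(Fact.out : p.Prime).pos])]
    · simp [hρone, Nat.cast_smul_eq_nsmul]
    · intro m hm hm0
      have hm' : (m : ZMod p) ≠ 0 := by
        rw [Ne, ZMod.natCast_eq_zero_iff]
        exact fun hdvd => hm0 (Nat.eq_zero_of_dvd_of_lt hdvd (Finset.mem_range.mp hm))
      have hperm : ∑ i : ZMod p, ψ (m • i) = ∑ i, ψ i :=
        Fintype.sum_equiv (Equiv.mulLeft₀ _ hm') _ _ fun i => by simp [nsmul_eq_mul]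
      rw [← Finset.sum_smul, hperm]
      exact sum_addChar_smul_eq_zero ψ (ρ φ) (hψ1 ▸ hdisj) (hψ1 ▸ htE v hv m)
  intro y hy
  obtain ⟨u, hu⟩ := hpu
  rw [← one_smul R y, ← u.inv_mul, mul_smul, hu, ← hsum y hy]
  refine Submodule.smul_mem _ _ (Submodule.sum_mem _ fun i _ => ?_)
  refine Submodule.mem_iSup_of_mem i (sum_pow_apply_mem_fixSub hρmul ?_ y)
  rw [(Commute.pow_left hφt i.val).mul_pow, ← pow_mul, mul_comm, pow_mul, hφ, one_pow, ht,
    one_mul]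

theorem exists_eigSp_le_iSup_fixSub {p : ℕ} [Fact p.Prime] {F : Subgroup A}
    (hFexp : ∀ f ∈ F, f ^ p = 1) (hFab : ∀ f ∈ F, ∀ g ∈ F, f * g = g * f) {φ t : A}
    (hφF : φ ∈ F) (hφ1 : φ ≠ 1) (htF : t ∈ F) (htφ : t ∉ Subgroup.zpowers φ) {ζ : R}
    (hζ : ζ ^ p = 1) (hζ1 : ζ = 1 ∨ Disjoint (eigSp (ρ φ) 1) (eigSp (ρ φ) ζ))
    (hpu : IsUnit (p : R)) :
    ∃ x : ZMod p → A, (∀ i, x i ∈ F ∧ x i ≠ 1) ∧ eigSp (ρ φ) ζ ≤ ⨆ i, fixSub ρ {x i} := by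
  rcases hζ1 with rfl | hdisj
  · exact ⟨fun _ => φ, fun _ => ⟨hφF, hφ1⟩,
      (eigSp_one_le_fixSub φ).trans (le_iSup_of_le (0 : ZMod p) le_rfl)⟩
  refine ⟨fun i => φ ^ i.val * t, fun i => ⟨mul_mem (pow_mem hφF _) htF, fun h => htφ ?_⟩,
    eigSp_le_iSup_fixSub hρone hρmul (hFab φ hφF t htF) (hFexp φ hφF) (hFexp t htF) hζ hdisj hpu⟩
  rw [eq_inv_of_mul_eq_one_right h]
  exact inv_mem (pow_mem (Subgroup.mem_zpowers φ) _)

end Action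

theorem metabelian_bracket_of_derived_kernel_fixed_points_vanishes_general
    (p : ℕ) (hp : p.Prime)
    (A : Type*) [Group A] (F : Subgroup A)
    (hFcard : Nat.card F = p ^ 2) (hFexp : ∀ f ∈ F, f ^ p = 1)
    (hFab : ∀ f ∈ F, ∀ g ∈ F, f * g = g * f)
    (Z : Subgroup A) (hZF : Z ≤ F) (hZcard : Nat.card Z = p)
    (φ : A) (hφZ : φ ∈ Z) (hφgen : Z ≤ Subgroup.zpowers φ)
    (R : Type*) [CommRing R]
    (ω : R) (hω : IsPrimitiveRoot ω p) (hpu : IsUnit (p : R))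
    (L : Type*) [LieRing L] [LieAlgebra R L]
    (ρ : A → (L ≃ₗ⁅R⁆ L))
    (hρone : ∀ x : L, ρ 1 x = x)
    (hρmul : ∀ g₁ g₂ : A, ∀ x : L, ρ (g₁ * g₂) x = ρ g₁ (ρ g₂ x))
    (Li : ZMod p → Submodule R L)
    (hLi : ∀ i : ZMod p, Li i = eigSp (ρ φ) (ω ^ i.val))
    (hdec : DirectSum.IsInternal Li)
    (hmeta : braSpan R ((braSpan R Set.univ Set.univ : Submodule R L) : Set L)
      ((braSpan R Set.univ Set.univ : Submodule R L) : Set L) = ⊥)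
    (d : ℕ)
    (hd : ∀ x ∈ F, x ≠ 1 →
      iterBra R (fixSub ρ {x} : Set L) (fixSub ρ {x} : Set L) d = ⊥) :
    ∀ a : ZMod p,
      iterBra R ((braSpan R Set.univ Set.univ ⊓ fixSub ρ (F : Set A) : Submodule R L) : Set L)
        (Li a : Set L) ((p ^ 2 - p) * (d - 1) + 1) = ⊥ := by
  intro a
  have : Fact p.Prime := ⟨hp⟩
  have hφF : φ ∈ F := hZF hφZ
  have hφ1 : φ ≠ 1 := by
    rintro rfl
    rw [Subgroup.zpowers_one_eq_bot, le_bot_iff] at hφgen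
    rw [hφgen, Subgroup.card_bot] at hZcard
    exact hp.one_lt.ne hZcard
  obtain ⟨t, htF, htZ⟩ : ∃ t ∈ F, t ∉ Z := SetLike.exists_of_lt <| hZF.lt_of_ne fun hZF' => by
    rw [← hZF', hZcard] at hFcard
    nlinarith [hp.two_le]
  have hLa : ω ^ a.val = 1 ∨ Disjoint (eigSp (ρ φ) 1) (eigSp (ρ φ) (ω ^ a.val)) := by
    by_cases ha : a = 0
    · simp [ha]
    · have hdisj : Disjoint (Li 0) (Li a) := hdec.submodule_iSupIndep.pairwiseDisjoint (Ne.symm ha)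
      rw [hLi, hLi, ZMod.val_zero, pow_zero] at hdisj
      exact Or.inr hdisj
  obtain ⟨x, hx, hcover⟩ := exists_eigSp_le_iSup_fixSub hρone hρmul hFexp hFab hφF hφ1 htF
    (fun ht => htZ (Subgroup.zpowers_le.mpr hφZ ht))
    (by rw [pow_right_comm, hω.pow_eq_one, one_pow]) hLa hpu
  refine iterBra_eq_bot_of_subset_iSup (M := (braSpan R Set.univ Set.univ : Submodule R L))
    (fun w _ y => lie_mem_braSpan (Set.mem_univ w) (Set.mem_univ y))
    (fun w hw u v => lie_eq_zero_of_braSpan_eq_bot hmeta hw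
      (lie_mem_braSpan (Set.mem_univ u) (Set.mem_univ v)))
    (fun i => fixSub ρ {x i}) (fun i => hd _ (hx i).1 (hx i).2) (fun c hc => hc.1)
    (fun i c hc => fixSub_anti (Set.singleton_subset_iff.mpr (hx i).1) hc.2) (hLi a ▸ hcover) ?_
  have hp2 : p ≤ p ^ 2 - p := Nat.le_sub_of_add_le (by nlinarith [hp.two_le])
  rw [ZMod.card]
  exact Nat.lt_succ_of_le (Nat.mul_le_mul_right _ hp2)

/-- Standing setup: a supersolvable Frobenius group `FH` (the finite group `A` with kernel
`F` elementary abelian of order `p^2` and cyclic complement `H` of order `q`), a subgroup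
`Z ≤ F` of order `p` normal in `FH` with generator `φ`, a finite commutative ring `R` with
a primitive `p`-th root of unity `ω` in which `p` is invertible, a Lie algebra `L` over `R`
on which `FH` acts by Lie-algebra automorphisms via `ρ`, and the eigenspace decomposition
`L = ⊕_{i ∈ ℤ/pℤ} L_i` of `ρ φ`.  If moreover `L` is metabelian and `C_L(x)` is nilpotent
of class at most `d` for every `x ∈ F^#`, then, with `L'_F = [L, L] ∩ C_L(F)` and
`k = p^2 - p`, for every `a ∈ ℤ/pℤ` one has `[L'_F, L_a, …, L_a] = 0` with `L_a`
occurring `k * (d - 1) + 1` times. -/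
theorem metabelian_bracket_of_derived_kernel_fixed_points_vanishes
    (p : ℕ) (hp : p.Prime)
    (A : Type*) [Group A] [Finite A] (F H : Subgroup A)
    (hFnorm : F.Normal) (hFH : F ⊓ H = ⊥) (hFHtop : F ⊔ H = ⊤)
    (hFnt : F ≠ ⊥) (hHnt : H ≠ ⊥)
    (hfrob : ∀ x ∈ H, x ≠ 1 → ∀ f ∈ F, x * f = f * x → f = 1)
    (hss : IsSupersolvable A)
    (hFcard : Nat.card F = p ^ 2) (hFexp : ∀ f ∈ F, f ^ p = 1)
    (hFab : ∀ f ∈ F, ∀ g ∈ F, f * g = g * f)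
    (q : ℕ) (hHcard : Nat.card H = q) (hHcyc : IsCyclic H)
    (Z : Subgroup A) (hZF : Z ≤ F) (hZnorm : Z.Normal) (hZcard : Nat.card Z = p)
    (φ : A) (hφZ : φ ∈ Z) (hφgen : Z ≤ Subgroup.zpowers φ)
    (R : Type*) [CommRing R] [Finite R]
    (ω : R) (hω : IsPrimitiveRoot ω p) (hpu : IsUnit (p : R))
    (L : Type*) [LieRing L] [LieAlgebra R L]
    (ρ : A → (L ≃ₗ⁅R⁆ L))
    (hρone : ∀ x : L, ρ 1 x = x)
    (hρmul : ∀ g₁ g₂ : A, ∀ x : L, ρ (g₁ * g₂) x = ρ g₁ (ρ g₂ x))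
    (Li : ZMod p → Submodule R L)
    (hLi : ∀ i : ZMod p, Li i = eigSp (ρ φ) (ω ^ i.val))
    (hdec : DirectSum.IsInternal Li)
    (hmeta : braSpan R ((braSpan R Set.univ Set.univ : Submodule R L) : Set L)
      ((braSpan R Set.univ Set.univ : Submodule R L) : Set L) = ⊥)
    (d : ℕ)
    (hd : ∀ x ∈ F, x ≠ 1 →
      iterBra R (fixSub ρ {x} : Set L) (fixSub ρ {x} : Set L) d = ⊥) :
    ∀ a : ZMod p,
      iterBra R ((braSpan R Set.univ Set.univ ⊓ fixSub ρ (F : Set A) : Submodule R L) : Set L)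
        (Li a : Set L) ((p ^ 2 - p) * (d - 1) + 1) = ⊥ :=
  metabelian_bracket_of_derived_kernel_fixed_points_vanishes_general p hp A F hFcard hFexp hFab Z
    hZF hZcard φ hφZ hφgen R ω hω hpu L ρ hρone hρmul Li hLi hdec hmeta d hd
end
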